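/- Suppose q is a primitive n-th root of unity in k with n ≥ 2. Then in the algebra B_q(f), the elements f(u) and f(v) are central if and only if n divides j for every j in the support of f. Moreover, if n divides j for every j in the support of f, then wⁿ is also central in B_q(f). -/

import Mathlib

open FreeAlgebra

/-- The defining relations of the algebra `B_q(f)` for `f = ∑_{j=0}^{d} c_j tʲ`:
generators `0 ↦ u`, `1 ↦ v`, `2 ↦ w` subject to `uv = qvu`, `wu = quw + f(v)`,
`wv = q⁻¹vw + f(u)`. -/
inductive BqfRel (k : Type*) [Field k] (q : k) (d : ℕ) (c : ℕ → k) :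
    FreeAlgebra k (Fin 3) → FreeAlgebra k (Fin 3) → Prop
  | uv : BqfRel k q d c (ι k (0 : Fin 3) * ι k (1 : Fin 3))
      (q • (ι k (1 : Fin 3) * ι k (0 : Fin 3)))
  | wu : BqfRel k q d c (ι k (2 : Fin 3) * ι k (0 : Fin 3))
      (q • (ι k (0 : Fin 3) * ι k (2 : Fin 3)) +
        ∑ j ∈ Finset.range (d + 1), c j • ι k (1 : Fin 3) ^ j)
  | wv : BqfRel k q d c (ι k (2 : Fin 3) * ι k (1 : Fin 3))
      (q⁻¹ • (ι k (1 : Fin 3) * ι k (2 : Fin 3)) +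
        ∑ j ∈ Finset.range (d + 1), c j • ι k (0 : Fin 3) ^ j)

/-!
If `n` divides every exponent of `f`, then `u ^ j` `q`-commutes with `v` with trivial twist, so
`f(u)` commutes with `v`, and likewise `f(v)` with `u`. From `wu = quw + f(v)` with `f(v)`
commuting with `u` one gets `w u ^ m = q ^ m u ^ m w + [m]_q f(v) u ^ (m - 1)`, and the
`q`-integer `[n]_q` vanishes, so `w` commutes with `u ^ n`, hence with `f(u)`; the same identity
with the power on `w` shows that `w ^ n` is central.

Conversely, `B_q(f)` acts on functions `ℤ × ℤ → k`: `u` and `v` by the weighted shifts realising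
the quantum torus, `w` by a sum of weighted shifts whose weights solve first-order linear
recurrences. In this model `f(u) v - v f(u) = ∑ c_j (q ^ j - 1) v u ^ j`, and the terms are
supported at distinct points, so `f(u)` central forces `q ^ j = 1` on the support of `f`.
-/

open Finset

section TwistedCommutation
variable {k A : Type*} [Field k] [Ring A] [Algebra k A]

theorem pow_mul_eq_smul_mul_pow {e : k} {x y : A} (h : x * y = e • (y * x)) (j : ℕ) :
    x ^ j * y = e ^ j • (y * x ^ j) := by
  induction j with
  | zero => simp
  | succ j ih =>
    rw [pow_succ, mul_assoc, h, mul_smul_comm, ← mul_assoc, ih, smul_mul_assoc, smul_smul,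
      mul_assoc, ← pow_succ, ← pow_succ']

theorem mul_pow_succ_eq_of_mul_eq {e : k} {x y g : A} (h : x * y = e • (y * x) + g)
    (hg : Commute g y) (m : ℕ) :
    x * y ^ (m + 1) =
      e ^ (m + 1) • (y ^ (m + 1) * x) + (∑ i ∈ range (m + 1), e ^ i) • (g * y ^ m) := by
  induction m with
  | zero => simpa using h
  | succ m ih =>
    have hgy : g * y ^ (m + 1) = y ^ (m + 1) * g := (hg.pow_right (m + 1)).eq
    calc x * y ^ (m + 2) = (x * y ^ (m + 1)) * y := by rw [pow_succ _ (m + 1), mul_assoc]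
      _ = e ^ (m + 1) • (y ^ (m + 1) * (x * y)) +
            (∑ i ∈ range (m + 1), e ^ i) • (g * y ^ (m + 1)) := by
        rw [ih, add_mul, smul_mul_assoc, smul_mul_assoc, mul_assoc, mul_assoc, ← pow_succ]
      _ = _ := by
        rw [h, mul_add, mul_smul_comm, ← mul_assoc, ← pow_succ, ← hgy, sum_range_succ _ (m + 1)]
        module

theorem commute_pow_right_of_mul_eq {e : k} {n : ℕ} (he : IsPrimitiveRoot e n) (hn : 1 < n)
    {x y g : A} (h : x * y = e • (y * x) + g) (hg : Commute g y) : Commute x (y ^ n) := by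
  obtain ⟨m, rfl⟩ : ∃ m, n = m + 1 := ⟨n - 1, by omega⟩
  rw [Commute, SemiconjBy, mul_pow_succ_eq_of_mul_eq h hg, he.pow_eq_one, he.geom_sum_eq_zero hn,
    one_smul, zero_smul, add_zero]

theorem commute_pow_left_of_mul_eq {e : k} {n : ℕ} (he : IsPrimitiveRoot e n) (hn : 1 < n)
    {x y g : A} (h : x * y = e • (y * x) + g) (hg : Commute g x) : Commute (x ^ n) y := by
  have h_op : MulOpposite.op y * MulOpposite.op x =
      e • (MulOpposite.op x * MulOpposite.op y) + MulOpposite.op g := by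
    simp only [← MulOpposite.op_mul, ← MulOpposite.op_smul, ← MulOpposite.op_add, h]
  have := commute_pow_right_of_mul_eq he hn h_op hg.op
  rw [← MulOpposite.op_pow] at this
  exact this.unop.symm

theorem commute_sum_smul_pow {x y : A} {d : ℕ} {c : ℕ → k}
    (h : ∀ j ≤ d, c j ≠ 0 → Commute (x ^ j) y) :
    Commute (∑ j ∈ range (d + 1), c j • x ^ j) y := by
  refine Commute.sum_left _ _ _ fun j hj => ?_
  rcases eq_or_ne (c j) 0 with hc | hc
  · simp [hc]
  · exact (h j (mem_range_succ_iff.mp hj) hc).smul_left _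

theorem commute_sum_smul_pow_of_mul_eq_smul {e : k} {x y : A} {d : ℕ} {c : ℕ → k}
    (h : x * y = e • (y * x)) (he : ∀ j ≤ d, c j ≠ 0 → e ^ j = 1) :
    Commute (∑ j ∈ range (d + 1), c j • x ^ j) y :=
  commute_sum_smul_pow fun j hj hc => by
    rw [Commute, SemiconjBy, pow_mul_eq_smul_mul_pow h, he j hj hc, one_smul]

theorem sum_smul_mul_eq_of_forall {ι : Type*} {s : Finset ι} {e : k} {c : ι → k} {W y : ι → A}
    {x : A} (h : ∀ j, W j * x = e • (x * W j) + y j) :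
    (∑ j ∈ s, c j • W j) * x = e • (x * ∑ j ∈ s, c j • W j) + ∑ j ∈ s, c j • y j := by
  simp only [sum_mul, mul_sum, smul_sum, ← sum_add_distrib, smul_mul_assoc, h, mul_smul_comm,
    smul_add, smul_comm e]

end TwistedCommutation

namespace BqfRel
variable {k : Type*} [Field k] {q : k} {d : ℕ} {c : ℕ → k}

variable (k q d c) in
abbrev gen (i : Fin 3) : RingQuot (BqfRel k q d c) := RingQuot.mkAlgHom k (BqfRel k q d c) (ι k i)

theorem gen_zero_mul_gen_one :
    gen k q d c 0 * gen k q d c 1 = q • (gen k q d c 1 * gen k q d c 0) := by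
  simpa only [map_mul, map_smul] using RingQuot.mkAlgHom_rel k (s := BqfRel k q d c) .uv

theorem gen_two_mul_gen_zero : gen k q d c 2 * gen k q d c 0 =
    q • (gen k q d c 0 * gen k q d c 2) + ∑ j ∈ range (d + 1), c j • gen k q d c 1 ^ j := by
  simpa only [map_mul, map_smul, map_add, map_sum, map_pow] using
    RingQuot.mkAlgHom_rel k (s := BqfRel k q d c) .wu

theorem gen_two_mul_gen_one : gen k q d c 2 * gen k q d c 1 =
    q⁻¹ • (gen k q d c 1 * gen k q d c 2) + ∑ j ∈ range (d + 1), c j • gen k q d c 0 ^ j := by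
  simpa only [map_mul, map_smul, map_add, map_sum, map_pow] using
    RingQuot.mkAlgHom_rel k (s := BqfRel k q d c) .wv

theorem mem_center_of_commute {z : RingQuot (BqfRel k q d c)} (hu : Commute (gen k q d c 0) z)
    (hv : Commute (gen k q d c 1) z) (hw : Commute (gen k q d c 2) z) :
    z ∈ Subalgebra.center k (RingQuot (BqfRel k q d c)) := by
  have h : ∀ i, Commute (gen k q d c i) z := by
    intro i
    fin_cases i
    exacts [hu, hv, hw]
  rw [Subalgebra.mem_center_iff]
  intro b
  obtain ⟨x, rfl⟩ := RingQuot.mkAlgHom_surjective k (BqfRel k q d c) b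
  induction x using FreeAlgebra.induction with
  | grade0 r => rw [AlgHom.commutes]; exact Algebra.commutes r z
  | grade1 i => exact (h i).eq
  | mul a b ha hb => rw [map_mul]; exact (Commute.mul_left ha hb).eq
  | add a b ha hb => rw [map_add]; exact (Commute.add_left ha hb).eq

section Lift
variable {A : Type*} [Ring A] [Algebra k A] (U V W : A)

def lift (huv : U * V = q • (V * U))
    (hwu : W * U = q • (U * W) + ∑ j ∈ range (d + 1), c j • V ^ j)
    (hwv : W * V = q⁻¹ • (V * W) + ∑ j ∈ range (d + 1), c j • U ^ j) :
    RingQuot (BqfRel k q d c) →ₐ[k] A :=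
  RingQuot.liftAlgHom k ⟨FreeAlgebra.lift k ![U, V, W], fun _ _ h => by
    cases h <;> simpa [map_sum]⟩

theorem lift_gen (huv hwu hwv) (i : Fin 3) :
    lift U V W huv hwu hwv (gen k q d c i) = ![U, V, W] i := by
  simp [lift]

end Lift
end BqfRel

section WeightedShift
variable {k : Type*} [Field k]

def weightedShift (i l : ℤ) (g : ℤ × ℤ → k) : Module.End k (ℤ × ℤ → k) where
  toFun φ p := g p * φ (p.1 - i, p.2 - l)
  map_add' _ _ := by ext; simp [mul_add]
  map_smul' _ _ := by ext; simp [mul_left_comm]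

@[simp]
theorem weightedShift_apply (i l : ℤ) (g : ℤ × ℤ → k) (φ : ℤ × ℤ → k) (p : ℤ × ℤ) :
    weightedShift i l g φ p = g p * φ (p.1 - i, p.2 - l) := rfl

theorem weightedShift_mul (i l i' l' : ℤ) (g g' : ℤ × ℤ → k) :
    weightedShift i l g * weightedShift i' l' g' =
      weightedShift (i + i') (l + l') (fun p => g p * g' (p.1 - i, p.2 - l)) := by
  ext φ p
  simp [mul_assoc, sub_sub]

variable (q : k)

def shiftU : Module.End k (ℤ × ℤ → k) := weightedShift 1 0 fun p => q ^ p.2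

variable (k) in
def shiftV : Module.End k (ℤ × ℤ → k) := weightedShift 0 1 1

theorem shiftU_pow (j : ℕ) : shiftU q ^ j = weightedShift j 0 fun p => (q ^ p.2) ^ j := by
  induction j with
  | zero => ext; simp
  | succ j ih =>
    rw [pow_succ, ih, shiftU, weightedShift_mul]
    ext φ p
    simp [pow_succ]

theorem shiftV_pow (j : ℕ) : shiftV k ^ j = weightedShift 0 j 1 := by
  induction j with
  | zero => ext; simp
  | succ j ih =>
    rw [pow_succ, ih, shiftV, weightedShift_mul]
    ext φ p
    simp

variable {q}

theorem shiftU_mul_shiftV (hq : q ≠ 0) : shiftU q * shiftV k = q • (shiftV k * shiftU q) := by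
  ext φ p
  simp only [shiftU, shiftV, Module.End.mul_apply, LinearMap.smul_apply, weightedShift_apply,
    Pi.smul_apply, Pi.one_apply, smul_eq_mul, one_mul, sub_zero, zpow_sub_one₀ hq]
  field_simp

theorem exists_solution_first_order_recurrence (r s : k) :
    ∃ γ : ℤ → k, ∀ a, γ a = r * γ (a - 1) + s := by
  by_cases hr : r = 1
  · exact ⟨fun a => s * a, fun a => by simp [hr]; ring⟩
  · refine ⟨fun _ => s / (1 - r), fun a => ?_⟩
    field_simp [sub_ne_zero.mpr (Ne.symm hr)]
    ring

theorem exists_mul_shiftU_eq_add_shiftV_pow (hq : q ≠ 0) (j : ℕ) :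
    ∃ A : Module.End k (ℤ × ℤ → k), A * shiftU q = q • (shiftU q * A) + shiftV k ^ j ∧
      A * shiftV k = q⁻¹ • (shiftV k * A) := by
  -- the recurrence for `γ` is the coefficient identity of the first relation
  obtain ⟨γ, hγ⟩ := exists_solution_first_order_recurrence (q ^ (j + 1)) (q ^ j)
  refine ⟨weightedShift (-1) j fun p => (q ^ p.2)⁻¹ * γ p.1, ?_, ?_⟩
  · rw [shiftV_pow]
    ext φ p
    simp only [shiftU, Module.End.mul_apply, weightedShift_apply, sub_neg_eq_add, zpow_sub₀ hq,
      zpow_natCast, add_sub_cancel_right, sub_zero, LinearMap.add_apply, LinearMap.smul_apply,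
      Pi.add_apply, Pi.smul_apply, sub_add_cancel, smul_eq_mul, Pi.one_apply, one_mul]
    rw [hγ]
    field_simp
    ring
  · ext φ p
    simp only [shiftV, Module.End.mul_apply, weightedShift_apply, sub_neg_eq_add, Pi.one_apply,
      sub_zero, one_mul, LinearMap.smul_apply, Pi.smul_apply, zpow_sub_one₀ hq, mul_inv_rev,
      inv_inv, smul_eq_mul]
    rw [sub_right_comm]
    field_simp

theorem exists_mul_shiftV_eq_add_shiftU_pow (hq : q ≠ 0) (j : ℕ) :
    ∃ B : Module.End k (ℤ × ℤ → k), B * shiftU q = q • (shiftU q * B) ∧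
      B * shiftV k = q⁻¹ • (shiftV k * B) + shiftU q ^ j := by
  obtain ⟨θ, hθ⟩ := exists_solution_first_order_recurrence (q ^ (j + 1))⁻¹ 1
  refine ⟨weightedShift j (-1) fun p => (q ^ p.2) ^ j * θ p.2, ?_, ?_⟩
  · ext φ p
    simp only [shiftU, Module.End.mul_apply, weightedShift_apply, sub_neg_eq_add,
      zpow_add_one₀ hq, sub_zero, LinearMap.smul_apply, Pi.smul_apply, smul_eq_mul]
    rw [sub_right_comm]
    ring
  · rw [shiftU_pow]
    ext φ p
    simp only [shiftV, Module.End.mul_apply, weightedShift_apply, sub_neg_eq_add, Pi.one_apply,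
      sub_zero, add_sub_cancel_right, one_mul, LinearMap.add_apply, LinearMap.smul_apply,
      Pi.add_apply, Pi.smul_apply, zpow_sub_one₀ hq, sub_add_cancel, smul_eq_mul]
    rw [hθ, mul_pow, inv_pow]
    field_simp
    ring

theorem exists_mul_shiftU_and_mul_shiftV_eq (hq : q ≠ 0) (j : ℕ) :
    ∃ W : Module.End k (ℤ × ℤ → k), W * shiftU q = q • (shiftU q * W) + shiftV k ^ j ∧
      W * shiftV k = q⁻¹ • (shiftV k * W) + shiftU q ^ j := by
  obtain ⟨A, hAU, hAV⟩ := exists_mul_shiftU_eq_add_shiftV_pow hq j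
  obtain ⟨B, hBU, hBV⟩ := exists_mul_shiftV_eq_add_shiftU_pow hq j
  refine ⟨A + B, ?_, ?_⟩
  · rw [add_mul, hAU, hBU, mul_add, smul_add]
    abel
  · rw [add_mul, hAV, hBV, mul_add, smul_add]
    abel

end WeightedShift

namespace BqfRel
variable {k : Type*} [Field k] {q : k} {d : ℕ} {c : ℕ → k}

theorem exists_algHom_shiftU_shiftV (hq : q ≠ 0) :
    ∃ ρ : RingQuot (BqfRel k q d c) →ₐ[k] Module.End k (ℤ × ℤ → k),
      ρ (gen k q d c 0) = shiftU q ∧ ρ (gen k q d c 1) = shiftV k := by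
  choose W hWU hWV using exists_mul_shiftU_and_mul_shiftV_eq hq
  exact ⟨lift (shiftU q) (shiftV k) (∑ j ∈ range (d + 1), c j • W j)
    (shiftU_mul_shiftV hq) (sum_smul_mul_eq_of_forall hWU) (sum_smul_mul_eq_of_forall hWV),
    lift_gen _ _ _ _ _ _ 0, lift_gen _ _ _ _ _ _ 1⟩

theorem pow_eq_one_of_commute (hq : q ≠ 0)
    (h : Commute (∑ j ∈ range (d + 1), c j • gen k q d c 0 ^ j) (gen k q d c 1))
    {j : ℕ} (hj : j ≤ d) (hc : c j ≠ 0) : q ^ j = 1 := by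
  obtain ⟨ρ, hρU, hρV⟩ := exists_algHom_shiftU_shiftV (d := d) (c := c) hq
  -- both sides of `f(u) v = v f(u)`, applied to the indicator of `(0, 0)`, evaluated at `(j, 1)`
  have hmodel := congrFun (LinearMap.congr_fun (congrArg ρ h.eq) (Pi.single (0, 0) 1)) (j, 1)
  simp only [map_mul, map_sum, map_smul, map_pow, hρU, shiftU_pow, hρV, shiftV,
    Module.End.mul_apply, LinearMap.coe_sum, LinearMap.coe_smul, Finset.sum_apply, Pi.smul_apply,
    weightedShift_apply, zpow_one, zpow_zero, sub_zero, Pi.one_apply, sub_self, Pi.single_apply,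
    Prod.ext_iff, sub_eq_zero, Nat.cast_inj, and_true, mul_ite, mul_one, mul_zero, smul_eq_mul,
    sum_ite_eq, mem_range, Order.lt_add_one_iff, one_pow, one_mul, if_pos hj] at hmodel
  exact mul_left_cancel₀ hc (hmodel.trans (mul_one _).symm)

theorem mem_center_of_forall_dvd {n : ℕ} (hq : IsPrimitiveRoot q n) (hn : 1 < n)
    (hdvd : ∀ j ≤ d, c j ≠ 0 → n ∣ j) :
    ∑ j ∈ range (d + 1), c j • gen k q d c 0 ^ j ∈ Subalgebra.center k (RingQuot (BqfRel k q d c)) ∧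
    ∑ j ∈ range (d + 1), c j • gen k q d c 1 ^ j ∈ Subalgebra.center k (RingQuot (BqfRel k q d c)) ∧
    gen k q d c 2 ^ n ∈ Subalgebra.center k (RingQuot (BqfRel k q d c)) := by
  set u := gen k q d c 0
  set v := gen k q d c 1
  set w := gen k q d c 2
  have huv : u * v = q • (v * u) := gen_zero_mul_gen_one
  have hvu : v * u = q⁻¹ • (u * v) := by
    rw [huv, smul_smul, inv_mul_cancel₀ (hq.ne_zero (by omega)), one_smul]
  have hwu : w * u = q • (u * w) + ∑ j ∈ range (d + 1), c j • v ^ j := gen_two_mul_gen_zero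
  have hwv : w * v = q⁻¹ • (v * w) + ∑ j ∈ range (d + 1), c j • u ^ j := gen_two_mul_gen_one
  have fu_u := commute_sum_smul_pow (d := d) (c := c) fun j _ _ => (Commute.refl u).pow_left j
  have fv_v := commute_sum_smul_pow (d := d) (c := c) fun j _ _ => (Commute.refl v).pow_left j
  have fu_v := commute_sum_smul_pow_of_mul_eq_smul huv
    fun j hj hc => (hq.pow_eq_one_iff_dvd j).mpr (hdvd j hj hc)
  have fv_u := commute_sum_smul_pow_of_mul_eq_smul hvu
    fun j hj hc => (hq.inv.pow_eq_one_iff_dvd j).mpr (hdvd j hj hc)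
  have w_un := commute_pow_right_of_mul_eq hq hn hwu fv_u
  have w_vn := commute_pow_right_of_mul_eq hq.inv hn hwv fu_v
  have fu_w := commute_sum_smul_pow fun j hj hc => by
    obtain ⟨m, rfl⟩ := hdvd j hj hc
    exact (pow_mul u n m ▸ w_un.pow_right m).symm
  have fv_w := commute_sum_smul_pow fun j hj hc => by
    obtain ⟨m, rfl⟩ := hdvd j hj hc
    exact (pow_mul v n m ▸ w_vn.pow_right m).symm
  exact ⟨mem_center_of_commute fu_u.symm fu_v.symm fu_w.symm,
    mem_center_of_commute fv_u.symm fv_v.symm fv_w.symm,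
    mem_center_of_commute (commute_pow_left_of_mul_eq hq hn hwu fv_w).symm
      (commute_pow_left_of_mul_eq hq.inv hn hwv fu_w).symm ((Commute.refl w).pow_right n)⟩

end BqfRel

theorem bqf_fu_fv_central_iff_general (k : Type*) [Field k] (q : k)
    (d : ℕ) (c : ℕ → k) (n : ℕ) (hn : 2 ≤ n) (hq : IsPrimitiveRoot q n) :
    let u := RingQuot.mkAlgHom k (BqfRel k q d c) (ι k (0 : Fin 3))
    let v := RingQuot.mkAlgHom k (BqfRel k q d c) (ι k (1 : Fin 3))
    let w := RingQuot.mkAlgHom k (BqfRel k q d c) (ι k (2 : Fin 3))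
    let fu := ∑ j ∈ Finset.range (d + 1), c j • u ^ j
    let fv := ∑ j ∈ Finset.range (d + 1), c j • v ^ j
    ((fu ∈ Subalgebra.center k (RingQuot (BqfRel k q d c)) ∧
      fv ∈ Subalgebra.center k (RingQuot (BqfRel k q d c))) ↔
        ∀ j ≤ d, c j ≠ 0 → n ∣ j) ∧
    ((∀ j ≤ d, c j ≠ 0 → n ∣ j) →
      w ^ n ∈ Subalgebra.center k (RingQuot (BqfRel k q d c))) := by
  intro u v w fu fv
  have hq0 : q ≠ 0 := hq.ne_zero (by omega)
  refine ⟨⟨fun h j hj hc => ?_, fun hdvd => ?_⟩,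
    fun hdvd => (BqfRel.mem_center_of_forall_dvd hq hn hdvd).2.2⟩
  · have hfu_v : Commute fu v := (Subalgebra.mem_center_iff.mp h.1 v).symm
    exact (hq.pow_eq_one_iff_dvd j).mp (BqfRel.pow_eq_one_of_commute hq0 hfu_v hj hc)
  · obtain ⟨hfu, hfv, -⟩ := BqfRel.mem_center_of_forall_dvd hq hn hdvd
    exact ⟨hfu, hfv⟩

/-- (char 0) Let `q` be a primitive `n`-th root of unity with `n ≥ 2`.
Then `f(u)` and `f(v)` are central in `B_q(f)` if and only if `n ∣ j` for every `j` in
the support of `f`; moreover, if `n ∣ j` for every `j` in the support of `f`, then `wⁿ`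
is also central. -/
theorem bqf_fu_fv_central_iff (k : Type*) [Field k] [CharZero k] (q : k)
    (d : ℕ) (c : ℕ → k) (n : ℕ) (hn : 2 ≤ n) (hq : IsPrimitiveRoot q n) :
    let u := RingQuot.mkAlgHom k (BqfRel k q d c) (ι k (0 : Fin 3))
    let v := RingQuot.mkAlgHom k (BqfRel k q d c) (ι k (1 : Fin 3))
    let w := RingQuot.mkAlgHom k (BqfRel k q d c) (ι k (2 : Fin 3))
    let fu := ∑ j ∈ Finset.range (d + 1), c j • u ^ j
    let fv := ∑ j ∈ Finset.range (d + 1), c j • v ^ j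
    ((fu ∈ Subalgebra.center k (RingQuot (BqfRel k q d c)) ∧
      fv ∈ Subalgebra.center k (RingQuot (BqfRel k q d c))) ↔
        ∀ j ≤ d, c j ≠ 0 → n ∣ j) ∧
    ((∀ j ≤ d, c j ≠ 0 → n ∣ j) →
      w ^ n ∈ Subalgebra.center k (RingQuot (BqfRel k q d c))) :=
  bqf_fu_fv_central_iff_general k q d c n hn hq
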